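/- arXiv:0907.2324 — 2 statements merged into one kernel-verified Lean document; each statement's English description precedes it below -/
import Mathlib

section
/- For every total computable martingale d there exists a computable sequence A : ℕ → Bool such that d(A↾(n+1)) ≤ d(A↾n) for every n ∈ ℕ; in particular d does not succeed on A. -/
/-!
Choosing at every step the child with the smaller capital defeats `d`: by fairness the smaller
of `d (w ++ [false])` and `d (w ++ [true])` is at most their average `d w`. The resulting sequence
is computable as soon as comparison of rationals is, and that is the only real work: the
`Primcodable ℚ` code of `q` is the rank of the code of `(q.num, q.den)` among all codes of reduced
fractions, so decoding it means finding the `n`-th element of a primitive recursive infinite set of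
naturals, which an unbounded search does.
-/

/-- A martingale: nonnegative with the fairness condition. -/
def IsMartingale (d : List Bool → ℚ) : Prop :=
  (∀ w, 0 ≤ d w) ∧ ∀ w, 2 * d w = d (w ++ [false]) + d (w ++ [true])

/-- The prefix A↾n = [A 0, …, A (n−1)]. -/
def prefixSeq (A : ℕ → Bool) (n : ℕ) : List Bool := (List.range n).map A

/-- A martingale succeeds on A if its capital along A is unbounded. -/
def Succeeds (d : List Bool → ℚ) (A : ℕ → Bool) : Prop :=
  ∀ c : ℚ, ∃ n, c < d (prefixSeq A n)

open Encodable Denumerable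

theorem Int.encode_natCast (n : ℕ) : encode (n : ℤ) = 2 * n := rfl

theorem Int.encode_negSucc (n : ℕ) : encode (Int.negSucc n) = 2 * n + 1 := rfl

theorem Primrec.int_toNat : Primrec Int.toNat :=
  ((Primrec.cond Primrec.nat_bodd (Primrec.const 0) Primrec.nat_div2).comp Primrec.encode).of_eq
    fun z => by cases z <;> simp [Int.encode_natCast, Int.encode_negSucc, Nat.div2_val]

-- On codes, negation sends `2 * n` to `2 * n - 1` and `2 * n + 1` to `2 * n + 2`.
theorem Primrec.int_neg : Primrec (Neg.neg : ℤ → ℤ) := by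
  refine Primrec.encode_iff.1 <| ((Primrec.cond Primrec.nat_bodd Primrec.succ
    (Primrec.nat_sub.comp Primrec.id (Primrec.const 1))).comp Primrec.encode).of_eq fun z => ?_
  rcases z with (_ | n) | n
  · rfl
  · change (bif (2 * (n + 1)).bodd then _ else 2 * (n + 1) - 1) = encode (Int.negSucc n)
    simp [Int.encode_negSucc]
    omega
  · change (bif (2 * n + 1).bodd then 2 * n + 1 + 1 else _) = encode ((n + 1 : ℕ) : ℤ)
    rw [Int.encode_natCast]
    simp
    omega

theorem Primrec.int_natAbs : Primrec Int.natAbs :=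
  (Primrec.nat_add.comp Primrec.int_toNat (Primrec.int_toNat.comp Primrec.int_neg)).of_eq
    Int.toNat_add_toNat_neg_eq_natAbs

theorem PrimrecRel.nat_dvd : PrimrecRel ((· ∣ ·) : ℕ → ℕ → Prop) :=
  (Primrec.eq.comp (Primrec.nat_mod.comp Primrec.snd Primrec.fst) (Primrec.const 0)).of_eq
    fun _ => Nat.dvd_iff_mod_eq_zero.symm

theorem Nat.coprime_iff_forall_mem_range (m n : ℕ) :
    m.Coprime n ↔ ∀ k ∈ List.range (m + n + 1), k ∣ m → k ∣ n → k = 1 := by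
  refine ⟨fun h k _ hm hn => Nat.eq_one_of_dvd_coprimes h hm hn,
    fun h => h _ ?_ (gcd_dvd_left m n) (gcd_dvd_right m n)⟩
  rw [List.mem_range, Nat.lt_succ_iff]
  rcases Nat.eq_zero_or_pos m with rfl | hm
  · simp
  · exact (Nat.gcd_le_left n hm).trans (Nat.le_add_right m n)

theorem PrimrecRel.nat_coprime : PrimrecRel Nat.Coprime := by
  have hcommon : PrimrecRel fun (k : ℕ) (p : ℕ × ℕ) => k ∣ p.1 → k ∣ p.2 → k = 1 :=
    (PrimrecRel.nat_dvd.comp Primrec.fst (Primrec.fst.comp Primrec.snd)).not.or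
      ((PrimrecRel.nat_dvd.comp Primrec.fst (Primrec.snd.comp Primrec.snd)).not.or
        (Primrec.eq.comp Primrec.fst (Primrec.const 1))) |>.of_eq fun _ => by tauto
  exact (hcommon.forall_mem_list.comp
    (Primrec.list_range.comp (Primrec.succ.comp (Primrec.nat_add.comp Primrec.fst Primrec.snd)))
    Primrec.id).of_eq fun p => (Nat.coprime_iff_forall_mem_range p.1 p.2).symm

theorem Primrec.nat_count {p : ℕ → Prop} [DecidablePred p] (hp : PrimrecPred p) :
    Primrec (Nat.count p) :=
  (Primrec.list_length.comp ((Primrec.listFilter hp).comp Primrec.list_range)).of_eq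
    fun _ => (List.countP_eq_length_filter ..).symm

theorem Computable.nat_nth {p : ℕ → Prop} (hp : PrimrecPred p) (hinf : (Set.ofPred p).Infinite) :
    Computable (Nat.nth p) := by
  classical
  -- `nth p n` is the least `c ∈ p` with exactly `n` elements of `p` below it
  have hsearch : Partrec₂ fun n c => Part.some (decide (p c ∧ Nat.count p c = n)) :=
    (PrimrecPred.and (hp.comp Primrec.snd)
      (Primrec.eq.comp ((Primrec.nat_count hp).comp Primrec.snd) Primrec.fst)).decide.to_comp.partrec
  refine (Partrec.rfind hsearch).of_eq_tot fun n => Nat.mem_rfind.2 ⟨?_, fun {m} hm => ?_⟩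
  · simpa using ⟨Nat.nth_mem_of_infinite hinf n, Nat.count_nth_of_infinite hinf n⟩
  · simp only [Part.mem_some_iff, Bool.false_eq, decide_eq_false_iff_not, not_and]
    rintro hpm rfl
    exact hm.ne (Nat.nth_count hpm).symm

namespace Rat

theorem mem_range_encode_iff (c : ℕ) :
    c ∈ Set.range (encode : ℚ → ℕ) ↔
      0 < (ofNat (ℤ × ℕ) c).2 ∧ (ofNat (ℤ × ℕ) c).1.natAbs.Coprime (ofNat (ℤ × ℕ) c).2 := by
  constructor
  · rintro ⟨q, rfl⟩
    have hdecode : ofNat (ℤ × ℕ) (encode q) = (q.num, q.den) := ofNat_encode (q.num, q.den)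
    rw [hdecode]
    exact ⟨q.pos, q.reduced⟩
  · rintro ⟨hpos, hcop⟩
    exact ⟨⟨_, _, hpos.ne', hcop⟩, encode_ofNat (α := ℤ × ℕ) c⟩

theorem primrecPred_mem_range_encode : PrimrecPred (· ∈ Set.range (encode : ℚ → ℕ)) :=
  (PrimrecPred.and (Primrec.nat_lt.comp (Primrec.const 0) (Primrec.snd.comp (Primrec.ofNat _)))
    (PrimrecRel.nat_coprime.comp (Primrec.int_natAbs.comp (Primrec.fst.comp (Primrec.ofNat _)))
      (Primrec.snd.comp (Primrec.ofNat _)))).of_eq fun c => (mem_range_encode_iff c).symm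

/-- `encode : ℚ → ℕ` is the structural code of `(q.num, q.den)`; the code used by `Primcodable ℚ`
(through `Denumerable ℚ`) is its rank in the range of `encode`. -/
theorem primcodable_encode_eq_count (q : ℚ) :
    @encode ℚ Primcodable.toEncodable q =
      @Nat.count (· ∈ Set.range (encode : ℚ → ℕ)) (decidableRangeEncode ℚ) (encode q) :=
  rfl

theorem computable_num_den : Computable fun q : ℚ => (q.num, q.den) := by
  have hinf : (Set.range (encode : ℚ → ℕ)).Infinite :=
    Set.infinite_range_of_injective encode_injective
  refine ((Primrec.ofNat (ℤ × ℕ)).to_comp.comp ((Computable.nat_nth primrecPred_mem_range_encode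
    hinf).comp Computable.encode)).of_eq fun q => ?_
  rw [primcodable_encode_eq_count, @Nat.nth_count _ (decidableRangeEncode ℚ) _ ⟨q, rfl⟩]
  exact ofNat_encode (q.num, q.den)

theorem le_iff_toNat (q r : ℚ) :
    q ≤ r ↔ q.num.toNat * r.den + (-r.num).toNat * q.den ≤
      r.num.toNat * q.den + (-q.num).toNat * r.den := by
  rw [Rat.le_iff]
  zify
  conv_lhs => rw [← Int.toNat_sub_toNat_neg q.num, ← Int.toNat_sub_toNat_neg r.num]
  constructor <;> intro h <;> linarith

theorem computable_decide_le : Computable₂ fun q r : ℚ => decide (q ≤ r) := by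
  have hnum : Computable fun q : ℚ => q.num := Computable.fst.comp computable_num_den
  have hden : Computable fun q : ℚ => q.den := Computable.snd.comp computable_num_den
  have hpos : Computable fun q : ℚ => q.num.toNat := Primrec.int_toNat.to_comp.comp hnum
  have hneg : Computable fun q : ℚ => (-q.num).toNat :=
    (Primrec.int_toNat.comp Primrec.int_neg).to_comp.comp hnum
  have hmul : Computable₂ ((· * ·) : ℕ → ℕ → ℕ) := Primrec.nat_mul.to_comp
  have hadd : Computable₂ ((· + ·) : ℕ → ℕ → ℕ) := Primrec.nat_add.to_comp
  refine (Primrec.nat_le.decide.to_comp.comp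
    (hadd.comp (hmul.comp (hpos.comp .fst) (hden.comp .snd))
      (hmul.comp (hneg.comp .snd) (hden.comp .fst)))
    (hadd.comp (hmul.comp (hpos.comp .snd) (hden.comp .fst))
      (hmul.comp (hneg.comp .fst) (hden.comp .snd)))).of_eq fun p => ?_
  simp only [le_iff_toNat]

end Rat

def greedyPrefix (next : List Bool → Bool) : ℕ → List Bool
  | 0 => []
  | n + 1 => greedyPrefix next n ++ [next (greedyPrefix next n)]

def greedySeq (next : List Bool → Bool) (n : ℕ) : Bool := next (greedyPrefix next n)

theorem prefixSeq_greedySeq (next : List Bool → Bool) (n : ℕ) :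
    prefixSeq (greedySeq next) n = greedyPrefix next n := by
  induction n with
  | zero => rfl
  | succ n ih => rw [prefixSeq, List.range_succ, List.map_append, ← prefixSeq, ih]; rfl

theorem Computable.greedySeq {next : List Bool → Bool} (h : Computable next) :
    Computable (greedySeq next) := by
  have hprefix : Computable (greedyPrefix next) :=
    (Computable.nat_rec .id (.const [])
      (Computable.list_concat.comp (Computable.snd.comp .snd)
        (h.comp (Computable.snd.comp .snd))).to₂).of_eq
      fun n => by induction n <;> simp_all [greedyPrefix]
  exact h.comp hprefix

def cheaperBit (d : List Bool → ℚ) (w : List Bool) : Bool :=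
  !decide (d (w ++ [false]) ≤ d (w ++ [true]))

theorem cheaperBit_le {d : List Bool → ℚ}
    (hfair : ∀ w, 2 * d w = d (w ++ [false]) + d (w ++ [true])) (w : List Bool) :
    d (w ++ [cheaperBit d w]) ≤ d w := by
  by_cases h : d (w ++ [false]) ≤ d (w ++ [true]) <;> simp [cheaperBit, h] <;> linarith [hfair w]

theorem Computable.cheaperBit {d : List Bool → ℚ} (hd : Computable d) :
    Computable (cheaperBit d) :=
  (Primrec.not.to_comp.comp (Rat.computable_decide_le.comp
    (hd.comp (Computable.list_concat.comp .id (.const false)))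
    (hd.comp (Computable.list_concat.comp .id (.const true))))).of_eq fun _ => rfl

theorem not_succeeds_of_antitone {d : List Bool → ℚ} {A : ℕ → Bool}
    (h : Antitone fun n => d (prefixSeq A n)) : ¬ Succeeds d A := fun hs =>
  let ⟨n, hn⟩ := hs (d (prefixSeq A 0))
  (h (Nat.zero_le n)).not_gt hn

/-- For every total computable martingale d there is a computable sequence A
on which the capital of d is non-increasing; in particular d does not succeed on A. -/
theorem defeat_single_total_computable_martingale
    (d : List Bool → ℚ) (hd : IsMartingale d) (hcomp : Computable d) :
    ∃ A : ℕ → Bool, Computable A ∧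
      (∀ n : ℕ, d (prefixSeq A (n + 1)) ≤ d (prefixSeq A n)) ∧
      ¬ Succeeds d A := by
  have hstep (n : ℕ) : d (prefixSeq (greedySeq (cheaperBit d)) (n + 1)) ≤
      d (prefixSeq (greedySeq (cheaperBit d)) n) := by
    simpa only [prefixSeq_greedySeq, greedyPrefix] using cheaperBit_le hd.2 _
  exact ⟨greedySeq (cheaperBit d), hcomp.cheaperBit.greedySeq, hstep,
    not_succeeds_of_antitone (antitone_nat_of_succ_le hstep)⟩
end

section
/- Let d be a martingale, π : ℕ → ℕ an injection, and s : List Bool → ℚ a function such that 0 ≤ s(u) ≤ d(u) and s(u) ≤ s(u ++ [i]) for every string u and bit i, and such that for every B : ℕ → Bool, if {d(B↾n) : n ∈ ℕ} is unbounded then {s(B↾n) : n ∈ ℕ} is unbounded (d has the saving property witnessed by s). Then for every A : ℕ → Bool on which the injective strategy b = (d, π) succeeds, the averaged martingale Av(d,π) succeeds on A; that is, Succ(b) ⊆ Succ(Av(d,π)). -/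
open scoped Classical

/-- The (injective) strategy (d, π) succeeds on A if the capital of d along the
rearranged sequence i ↦ A (π i) is unbounded. -/
def StratSucceeds (d : List Bool → ℚ) (π : ℕ → ℕ) (A : ℕ → Bool) : Prop :=
  ∀ c : ℚ, ∃ n, c < d (prefixSeq (fun i => A (π i)) n)

/-- b̂(w): the capital of the strategy (d, π) after the finite game on the string w,
stopping at the least N with π N ≥ |w| (the game reads the bits w_{π 0}, …, w_{π (N−1)},
all of which lie inside w by minimality of N). -/
noncomputable def playHat (d : List Bool → ℚ) (π : ℕ → ℕ) (w : List Bool) : ℚ :=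
  if h : ∃ N, w.length ≤ π N then
    d ((List.range (Nat.find h)).map (fun i => w.getD (π i) false))
  else 0

/-- 2^{|w|−M} · ∑_{w ⊑ wʹ, |wʹ| = M} b̂(wʹ): the average capital of (d, π) over all
extensions of w of length M (extensions are parameterized by v : Fin (M − |w|) → Bool). -/
noncomputable def avgAt (d : List Bool → ℚ) (π : ℕ → ℕ) (w : List Bool) (M : ℕ) : ℚ :=
  (∑ v : Fin (M - w.length) → Bool, playHat d π (w ++ List.ofFn v)) / 2 ^ (M - w.length)

/-- M is a good cutoff for π at length n if M ≥ n and
π([0,M)) ∩ [0,n) = π(ℕ) ∩ [0,n). -/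
def GoodCutoff (π : ℕ → ℕ) (n M : ℕ) : Prop :=
  n ≤ M ∧ ∀ k, π k < n → ∃ j < M, π j = π k

/-- The averaged martingale Av(d,π), computed at the least good cutoff. -/
noncomputable def Av (d : List Bool → ℚ) (π : ℕ → ℕ) (w : List Bool) : ℚ :=
  if h : ∃ M, GoodCutoff π w.length M then avgAt d π w (Nat.find h) else 0

/-- If the martingale d has the saving property witnessed by s, then the
averaged martingale Av(d,π) succeeds on every sequence on which the injective
strategy (d,π) succeeds: Succ(b) ⊆ Succ(Av(d,π)). -/
theorem saving_strategy_average_succeeds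
    (d : List Bool → ℚ) (π : ℕ → ℕ) (s : List Bool → ℚ)
    (hd : IsMartingale d) (hπ : Function.Injective π)
    (hs₀ : ∀ u, 0 ≤ s u ∧ s u ≤ d u)
    (hs₁ : ∀ u (i : Bool), s u ≤ s (u ++ [i]))
    (hs₂ : ∀ B : ℕ → Bool, (∀ c : ℚ, ∃ n, c < d (prefixSeq B n)) →
      ∀ c : ℚ, ∃ n, c < s (prefixSeq B n)) :
    ∀ A : ℕ → Bool, StratSucceeds d π A → Succeeds (Av d π) A := by
  intro A hA c
  obtain ⟨k, hk⟩ := hs₂ (fun i => A (π i)) hA c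
  set n : ℕ := ((Finset.range k).sup π) + 1 with hn
  have hπn : ∀ i < k, π i < n :=
    fun i hi => Nat.lt_succ_of_le (Finset.le_sup (Finset.mem_range.mpr hi))
  refine ⟨n, ?_⟩
  have hwlen : (prefixSeq A n).length = n := by simp [prefixSeq]
  have hfin : (π ⁻¹' Set.Iio n).Finite :=
    Set.Finite.preimage hπ.injOn (Set.finite_Iio n)
  obtain ⟨m, hm⟩ := hfin.bddAbove
  have hex : ∃ M, GoodCutoff π (prefixSeq A n).length M := by
    refine ⟨max n (m + 1), ?_, ?_⟩
    · rw [hwlen]; exact le_max_left _ _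
    · intro j hj
      refine ⟨j, ?_, rfl⟩
      have hj' : j ≤ m := hm (by rw [hwlen] at hj; exact hj)
      exact lt_of_lt_of_le (Nat.lt_succ_of_le hj') (le_max_right _ _)
  rw [Av, dif_pos hex]
  set M := Nat.find hex with hMdef
  have hnM : n ≤ M := le_trans hwlen.ge (Nat.find_spec hex).1
  have hπub : ∀ L : ℕ, ∃ N, L ≤ π N := by
    intro L
    by_contra hcon
    push_neg at hcon
    have hsub : Set.range π ⊆ Set.Iio L := by rintro _ ⟨i, rfl⟩; exact hcon i
    exact (Set.infinite_range_of_injective hπ) ((Set.finite_Iio L).subset hsub)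
  have smono : ∀ t u, s u ≤ s (u ++ t) := by
    intro t
    induction t with
    | nil => intro u; simp
    | cons b t ih =>
      intro u
      calc s u ≤ s (u ++ [b]) := hs₁ u b
        _ ≤ s ((u ++ [b]) ++ t) := ih (u ++ [b])
        _ = s (u ++ b :: t) := by rw [List.append_assoc]; rfl
  have key : ∀ v : Fin (M - (prefixSeq A n).length) → Bool,
      c < playHat d π (prefixSeq A n ++ List.ofFn v) := by
    intro v
    set w' := prefixSeq A n ++ List.ofFn v with hw'
    have hw'len : w'.length = M := by
      simp [hw', hwlen, Nat.add_sub_cancel' hnM]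
    have hexN : ∃ N, w'.length ≤ π N := hπub _
    rw [playHat, dif_pos hexN]
    set N := Nat.find hexN with hNdef
    have hkN : k ≤ N := by
      rw [hNdef, Nat.le_find_iff]
      intro i hi
      rw [hw'len]
      exact Nat.not_le.mpr (lt_of_lt_of_le (hπn i hi) hnM)
    set r := (List.range N).map (fun i => w'.getD (π i) false) with hr
    have hrk : r.take k = prefixSeq (fun i => A (π i)) k := by
      rw [hr, ← List.map_take, List.take_range, min_eq_left hkN]
      unfold prefixSeq
      apply List.map_congr_left
      intro i hi
      have hik : i < k := List.mem_range.mp hi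
      have hπi : π i < (prefixSeq A n).length := by rw [hwlen]; exact hπn i hik
      rw [hw', List.getD_append _ _ _ _ hπi]
      simp [prefixSeq, List.getD_eq_getElem?_getD, List.getElem?_map,
        List.getElem?_range (hwlen ▸ hπi : π i < n)]
    calc c < s (prefixSeq (fun i => A (π i)) k) := hk
      _ ≤ s r := by
          conv_rhs => rw [← List.take_append_drop k r, hrk]
          exact smono _ _
      _ ≤ d r := (hs₀ r).2
  rw [avgAt, lt_div_iff₀ (by positivity)]
  have hcard : (Finset.univ : Finset (Fin (M - (prefixSeq A n).length) → Bool)).card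
      = 2 ^ (M - (prefixSeq A n).length) := by simp
  calc c * 2 ^ (M - (prefixSeq A n).length)
      = ∑ _v : Fin (M - (prefixSeq A n).length) → Bool, c := by
        rw [Finset.sum_const, hcard, nsmul_eq_mul, mul_comm]; norm_num
    _ < ∑ v : Fin (M - (prefixSeq A n).length) → Bool,
          playHat d π (prefixSeq A n ++ List.ofFn v) :=
        Finset.sum_lt_sum_of_nonempty Finset.univ_nonempty (fun v _ => key v)
end
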